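/- Let p be a prime and let H = ⟨a, b; a⁻¹ba = b^{1+p}, a^p = 1, b^{p²} = 1⟩, a group of order p³. Then the HNN-extension H* = (H, t; t⁻¹at = b^p), with associated cyclic subgroups A = ⟨a⟩ and B = ⟨b^p⟩ and isomorphism sending a to b^p, is not residually a finite p-group. -/

import Mathlib

/-- A group `X` is *residually a finite p-group* if every non-identity element is excluded
by some normal subgroup of `p`-power index. -/
def ResiduallyPGroup (p : ℕ) (X : Type*) [Group X] : Prop :=
  ∀ x : X, x ≠ 1 → ∃ N : Subgroup X, N.Normal ∧ x ∉ N ∧ ∃ k : ℕ, N.index = p ^ k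

/-- The relators `a⁻¹ba·b⁻⁽¹⁺ᵖ⁾`, `aᵖ`, `b^{p²}` of the nonabelian group of order `p³`,
with `a = FreeGroup.of 0` and `b = FreeGroup.of 1`. -/
def mpRels (p : ℕ) : Set (FreeGroup (Fin 2)) :=
  {(FreeGroup.of 0)⁻¹ * FreeGroup.of 1 * FreeGroup.of 0 * ((FreeGroup.of 1) ^ (1 + p))⁻¹,
   (FreeGroup.of 0) ^ p, (FreeGroup.of 1) ^ (p ^ 2)}

/-- The group `H = ⟨a, b; a⁻¹ba = b^{1+p}, aᵖ = 1, b^{p²} = 1⟩` of order `p³`. -/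
def MpGroup (p : ℕ) : Type := PresentedGroup (mpRels p)

instance (p : ℕ) : Group (MpGroup p) := by delta MpGroup; infer_instance

/-- The generator `a` of `MpGroup p`. -/
def MpGroup.a (p : ℕ) : MpGroup p := PresentedGroup.of (0 : Fin 2)

/-- The generator `b` of `MpGroup p`. -/
def MpGroup.b (p : ℕ) : MpGroup p := PresentedGroup.of (1 : Fin 2)

/-!
In a finite `p`-group, which is nilpotent, an element conjugate to a commutator `⁅x⁻¹, y⁆`
lies in every term of the lower central series and is therefore trivial. In `H*` the
relation `a⁻¹ba = b^{1+p}` says `bᵖ = ⁅a⁻¹, b⁆`, and `t` conjugates `a` to `bᵖ`; so the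
image of `a` dies in every finite `p`-quotient of `H*`, although `a ≠ 1` in `H ≤ H*`.
-/

open Subgroup
open scoped commutatorElement

theorem Group.eq_one_of_isConj_commutatorElement_inv {G : Type*} [Group G]
    [Group.IsNilpotent G] {x y : G} (h : IsConj x ⁅x⁻¹, y⁆) : x = 1 := by
  obtain ⟨c, hc⟩ := isConj_iff.mp h.symm
  have mem_all : ∀ n, x ∈ (⊤ : Subgroup G).lowerCentralSeries n := by
    intro n
    induction n with
    | zero => exact mem_top x
    | succ n ih =>
      have hcomm : ⁅x⁻¹, y⁆ ∈ (⊤ : Subgroup G).lowerCentralSeries (n + 1) :=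
        commutator_mem_commutator (inv_mem ih) (mem_top y)
      have hconj := (lowerCentralSeries_normal ⊤ (n + 1)).conj_mem _ hcomm c
      rwa [hc] at hconj
  obtain ⟨n, hn⟩ := Subgroup.nilpotent_iff_lowerCentralSeries.mp ‹_›
  simpa [hn] using mem_all n

theorem ResiduallyPGroup.eq_one_of_isConj_commutatorElement_inv {p : ℕ} [Fact p.Prime]
    {X : Type*} [Group X] (hX : ResiduallyPGroup p X) {x y : X} (h : IsConj x ⁅x⁻¹, y⁆) :
    x = 1 := by
  by_contra hx
  obtain ⟨N, hN, hxN, k, hk⟩ := hX x hx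
  have hcard : Nat.card (X ⧸ N) = p ^ k := hk
  have : Finite (X ⧸ N) :=
    Nat.finite_of_card_ne_zero (hcard ▸ pow_ne_zero k (Fact.out : p.Prime).ne_zero)
  have : Group.IsNilpotent (X ⧸ N) := (IsPGroup.of_card hcard).isNilpotent
  have hconj := (QuotientGroup.mk' N).map_isConj h
  rw [map_commutatorElement, map_inv] at hconj
  exact hxN ((QuotientGroup.eq_one_iff x).mp (Group.eq_one_of_isConj_commutatorElement_inv hconj))

namespace MpGroup

variable {p : ℕ}

theorem inv_a_mul_b_mul_a : (a p)⁻¹ * b p * a p = b p ^ (1 + p) := by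
  have hrel : PresentedGroup.mk (mpRels p)
      ((FreeGroup.of 0)⁻¹ * FreeGroup.of 1 * FreeGroup.of 0 * (FreeGroup.of 1 ^ (1 + p))⁻¹) = 1 :=
    (QuotientGroup.eq_one_iff _).mpr (subset_normalClosure (Or.inl rfl))
  simp only [map_mul, map_inv, map_pow] at hrel
  exact mul_inv_eq_one.mp hrel

theorem b_pow_eq_commutatorElement : b p ^ p = ⁅(a p)⁻¹, b p⁆ := by
  rw [commutatorElement_def, inv_inv, inv_a_mul_b_mul_a, add_comm, pow_succ, mul_inv_cancel_right]

/-- `a` survives in the quotient `ℤ/p` that kills `b`. -/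
theorem a_ne_one (hp : p ≠ 1) : a p ≠ 1 := by
  have : Nontrivial (ZMod p) := ZMod.nontrivial_iff.mpr hp
  let f : FreeGroup (Fin 2) →* Multiplicative (ZMod p) :=
    FreeGroup.lift ![Multiplicative.ofAdd 1, 1]
  have hf : ∀ r ∈ mpRels p, f r = 1 := by
    rintro r (rfl | rfl | rfl)
    · simp [f]
    · simp [f, ← ofAdd_nsmul]
    · simp [f]
  intro ha
  have h : Multiplicative.ofAdd (1 : ZMod p) = 1 :=
    (PresentedGroup.toGroup.of hf).symm.trans ((congrArg _ ha).trans (map_one _))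
  exact one_ne_zero (ofAdd_eq_one.mp h)

end MpGroup

/-- **Example.** Let `p` be a prime and `H = ⟨a, b; a⁻¹ba = b^{1+p}, aᵖ = 1, b^{p²} = 1⟩`
(a group of order `p³`). The HNN-extension `H* = (H, t; t⁻¹at = bᵖ)`, with associated cyclic
subgroups `A = ⟨a⟩`, `B = ⟨bᵖ⟩` and isomorphism sending `a` to `bᵖ`, is not residually a
finite `p`-group. -/
theorem mpGroup_hnn_not_residually_p
    (p : ℕ) (hp : p.Prime)
    (φ : Subgroup.zpowers (MpGroup.a p) ≃* Subgroup.zpowers (MpGroup.b p ^ p))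
    (hφ : (φ ⟨MpGroup.a p, Subgroup.mem_zpowers _⟩ : MpGroup p) = MpGroup.b p ^ p) :
    ¬ ResiduallyPGroup p
        (HNNExtension (MpGroup p) (Subgroup.zpowers (MpGroup.a p))
          (Subgroup.zpowers (MpGroup.b p ^ p)) φ) := by
  have : Fact p.Prime := ⟨hp⟩
  intro hres
  have hconj : IsConj (HNNExtension.of (φ := φ) (MpGroup.a p))
      ⁅(HNNExtension.of (φ := φ) (MpGroup.a p))⁻¹, HNNExtension.of (φ := φ) (MpGroup.b p)⁆ := by
    refine isConj_iff.mpr ⟨HNNExtension.t, ?_⟩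
    rw [← HNNExtension.equiv_eq_conj ⟨MpGroup.a p, mem_zpowers _⟩, hφ, ← map_inv,
      ← map_commutatorElement]
    exact congrArg _ MpGroup.b_pow_eq_commutatorElement
  exact MpGroup.a_ne_one hp.ne_one <| HNNExtension.of_injective (φ := φ) <|
    (hres.eq_one_of_isConj_commutatorElement_inv hconj).trans (map_one _).symm
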